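/- arXiv:2602.17405 — 4 statements merged into one kernel-verified Lean document; each statement's English description precedes it below -/
import Mathlib

section
/- Let f : ℝⁿ → ℝ be Lipschitz continuous on a neighbourhood of x̄ and tangentially convex at x̄. Then the tangential subdifferential of f at x̄ is contained in the Fréchet subdifferential: ∂_T f(x̄) ⊆ ∂̂f(x̄); consequently ∂̂f(x̄) = ∂_T f(x̄). -/
open Filter Topology Set Metric
open scoped Pointwise RealInnerProductSpace Classical

noncomputable section

/-- `En n` is the Euclidean space `ℝⁿ`. -/
abbrev En (n : ℕ) := EuclideanSpace ℝ (Fin n)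

/-- `HasDirDeriv f x d L` : the (one-sided) directional derivative
`f'(x;d) = lim_{t↓0} (f(x+td)-f(x))/t` exists and equals `L`. -/
def HasDirDeriv {n : ℕ} (f : En n → ℝ) (x d : En n) (L : ℝ) : Prop :=
  Tendsto (fun t : ℝ => (f (x + t • d) - f x) / t) (𝓝[>] 0) (𝓝 L)

/-- Fréchet subdifferential `∂̂f(x)` of a real-valued function. -/
def frechetSub {n : ℕ} (f : En n → ℝ) (x : En n) : Set (En n) :=
  {ξ | 0 ≤ liminf (fun y => (((f y - f x - ⟪ξ, y - x⟫) / ‖y - x‖ : ℝ) : EReal)) (𝓝[≠] x)}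

/-- Limiting (Mordukhovich) subdifferential `∂_L f(x)`. -/
def limitingSub {n : ℕ} (f : En n → ℝ) (x : En n) : Set (En n) :=
  {ξ | ∃ (xs ξs : ℕ → En n), Tendsto xs atTop (𝓝 x) ∧
    Tendsto (fun k => f (xs k)) atTop (𝓝 (f x)) ∧
    Tendsto ξs atTop (𝓝 ξ) ∧ ∀ k, ξs k ∈ frechetSub f (xs k)}

/-- Tangential subdifferential associated with a directional-derivative function `f' = f'(x̄;·)`:
`∂_T f(x̄) = {ξ : ⟪ξ,d⟫ ≤ f'(x̄;d) ∀ d}`. -/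
def tangSub {n : ℕ} (f' : En n → ℝ) : Set (En n) := {ξ | ∀ d, ⟪ξ, d⟫ ≤ f' d}

private lemma liminf_map_aux {α β : Type*} (u : β → EReal) (φ : α → β) (l : Filter α) :
    liminf u (Filter.map φ l) = liminf (u ∘ φ) l := by
  simp [liminf_eq, eventually_map]

private lemma ereal_nonneg_of_forall {L : EReal} (h : ∀ ε : ℝ, 0 < ε → ((-ε : ℝ) : EReal) ≤ L) :
    (0 : EReal) ≤ L := by
  by_contra hc
  push_neg at hc
  have hc' : L < ((0 : ℝ) : EReal) := by simpa using hc
  obtain ⟨x, hx1, hx2⟩ := EReal.lt_iff_exists_real_btwn.1 hc'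
  have hx0 : (0:ℝ) < -x := neg_pos.2 (by exact_mod_cast hx2)
  have := h (-x) hx0
  simp only [neg_neg] at this
  exact absurd (this.trans_lt hx1) (lt_irrefl _)

/-- if `f : ℝⁿ → ℝ` is Lipschitz on a neighbourhood of `xb` and tangentially
convex at `xb` (with directional derivative function `f'`), then `∂_T f(xb) ⊆ ∂̂f(xb)`,
and consequently `∂̂f(xb) = ∂_T f(xb)`. -/
theorem statement1 {n : ℕ} (f : En n → ℝ) (xb : En n)
    (hlip : ∃ (K : NNReal) (U : Set (En n)), U ∈ 𝓝 xb ∧ LipschitzOnWith K f U)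
    (f' : En n → ℝ)
    (hderiv : ∀ d : En n, HasDirDeriv f xb d (f' d))
    (hconv : ConvexOn ℝ Set.univ f') :
    tangSub f' ⊆ frechetSub f xb ∧ frechetSub f xb = tangSub f' := by
  obtain ⟨K, U, hU, hK⟩ := hlip
  obtain ⟨r, hr, hrU⟩ := Metric.nhds_basis_closedBall.mem_iff.1 hU
  -- Part A : tangSub ⊆ frechetSub
  have hA : tangSub f' ⊆ frechetSub f xb := by
    intro ξ hξ
    refine ereal_nonneg_of_forall fun ε hε => ?_
    refine le_liminf_of_le (by isBoundedDefault) ?_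
    -- eventual lower bound by -ε
    set M : ℝ := (K : ℝ) + ‖ξ‖ + 1 with hM
    have hMpos : 0 < M := by positivity
    set ρ : ℝ := ε / (2 * M) with hρ
    have hρpos : 0 < ρ := by positivity
    have key2 : ∀ d : sphere (0 : En n) 1, ∃ δ > 0, ∀ t : ℝ, 0 < t → t < δ →
        ⟪ξ, (d : En n)⟫ - ε / 2 < (f (xb + t • (d : En n)) - f xb) / t := by
      intro d
      have h1 : ⟪ξ, (d : En n)⟫ ≤ f' d := hξ (d : En n)
      have h2 : ∀ᶠ t in 𝓝[>] (0:ℝ),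
          ⟪ξ, (d : En n)⟫ - ε / 2 < (f (xb + t • (d : En n)) - f xb) / t := by
        have hev := (hderiv (d : En n)).eventually
          (eventually_gt_nhds (show f' (d : En n) - ε / 2 < f' (d : En n) by linarith))
        filter_upwards [hev] with t ht
        linarith
      obtain ⟨δ, hδ, hsub⟩ := mem_nhdsGT_iff_exists_Ioo_subset.1 h2
      exact ⟨δ, hδ, fun t ht1 ht2 => hsub ⟨ht1, ht2⟩⟩
    choose δf hδf hprop using key2
    obtain ⟨T, hT⟩ := (isCompact_sphere (0 : En n) 1).elim_finite_subcover
      (fun d : sphere (0:En n) 1 => ball (d : En n) ρ) (fun d => isOpen_ball)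
      (fun x hx => mem_iUnion.2 ⟨⟨x, hx⟩, mem_ball_self hρpos⟩)
    set δ1 : ℝ := if h : T.Nonempty then T.inf' h δf else 1 with hδ1def
    have hδ1pos : 0 < δ1 := by
      rw [hδ1def]
      split_ifs with h
      · exact (Finset.lt_inf'_iff h).2 fun i _ => hδf i
      · norm_num
    set δ : ℝ := min r δ1 with hδdef
    have hδpos : 0 < δ := lt_min hr hδ1pos
    filter_upwards [mem_nhdsWithin_of_mem_nhds (ball_mem_nhds xb hδpos),
      self_mem_nhdsWithin] with y hy hyne
    have hyne' : y ≠ xb := hyne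
    set t : ℝ := ‖y - xb‖ with htdef
    have ht : 0 < t := norm_pos_iff.2 (sub_ne_zero.2 hyne')
    have htδ : t < δ := by rw [htdef, ← dist_eq_norm]; exact mem_ball.1 hy
    set d' : En n := t⁻¹ • (y - xb) with hd'def
    have hd'norm : ‖d'‖ = 1 := by
      rw [hd'def, norm_smul, norm_inv, Real.norm_eq_abs, abs_of_pos ht, ← htdef,
        inv_mul_cancel₀ ht.ne']
    have hd'S : d' ∈ sphere (0 : En n) 1 := mem_sphere_zero_iff_norm.2 hd'norm
    obtain ⟨i, hiT, hiball⟩ := mem_iUnion₂.1 (hT hd'S)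
    set d : En n := (i : En n) with hddef
    have hdnorm : ‖d‖ = 1 := mem_sphere_zero_iff_norm.1 i.2
    have hdd' : ‖d' - d‖ ≤ ρ := by
      have : dist d' d < ρ := mem_ball.1 hiball
      rw [dist_eq_norm] at this
      exact this.le
    have hy_eq : y = xb + t • d' := by
      rw [hd'def, smul_smul, mul_inv_cancel₀ ht.ne', one_smul]
      abel
    -- t < δf i
    have htδf : t < δf i := by
      have hTne : T.Nonempty := ⟨i, hiT⟩
      have h1 : δ1 ≤ δf i := by
        rw [hδ1def, dif_pos hTne]; exact Finset.inf'_le _ hiT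
      calc t < δ := htδ
        _ ≤ δ1 := min_le_right _ _
        _ ≤ δf i := h1
    -- directional derivative bound at d
    have hdir : ⟪ξ, d⟫ - ε / 2 < (f (xb + t • d) - f xb) / t := hprop i t ht htδf
    -- points in U
    have hyU : y ∈ U := hrU (by
      rw [mem_closedBall, dist_eq_norm]
      exact le_trans htδ.le (min_le_left _ _))
    have hdU : xb + t • d ∈ U := hrU (by
      rw [mem_closedBall, dist_eq_norm]
      have : ‖xb + t • d - xb‖ = t := by
        rw [add_sub_cancel_left, norm_smul, Real.norm_eq_abs, abs_of_pos ht, hdnorm, mul_one]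
      rw [this]
      exact le_trans htδ.le (min_le_left _ _))
    -- Lipschitz estimate
    have hlip2 : |f y - f (xb + t • d)| ≤ (K : ℝ) * (t * ρ) := by
      have h1 := hK.dist_le_mul y hyU (xb + t • d) hdU
      rw [Real.dist_eq] at h1
      refine h1.trans ?_
      have h2 : dist y (xb + t • d) = t * ‖d' - d‖ := by
        rw [dist_eq_norm, hy_eq]
        have : xb + t • d' - (xb + t • d) = t • (d' - d) := by
          rw [smul_sub]; abel
        rw [this, norm_smul, Real.norm_eq_abs, abs_of_pos ht]
      rw [h2]
      have := mul_le_mul_of_nonneg_left hdd' ht.le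
      nlinarith [K.coe_nonneg]
    -- inner product estimates
    have hinner : |⟪ξ, d'⟫ - ⟪ξ, d⟫| ≤ ‖ξ‖ * ρ := by
      rw [← inner_sub_right]
      refine (abs_real_inner_le_norm ξ (d' - d)).trans ?_
      exact mul_le_mul_of_nonneg_left hdd' (norm_nonneg ξ)
    have hinner_y : ⟪ξ, y - xb⟫ = t * ⟪ξ, d'⟫ := by
      rw [hy_eq]
      rw [add_sub_cancel_left, real_inner_smul_right]
    -- main chain
    have hKρ : ((K : ℝ) + ‖ξ‖) * ρ ≤ ε / 2 := by
      have h1 : ((K : ℝ) + ‖ξ‖) ≤ M := by rw [hM]; linarith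
      have h2 : M * ρ = ε / 2 := by
        rw [hρ]; field_simp
      calc ((K : ℝ) + ‖ξ‖) * ρ ≤ M * ρ := mul_le_mul_of_nonneg_right h1 hρpos.le
        _ = ε / 2 := h2
    have habs1 := abs_le.1 hlip2
    have habs2 := abs_le.1 hinner
    have hmain : -ε ≤ (f y - f xb - ⟪ξ, y - xb⟫) / t := by
      rw [hinner_y]
      rw [le_div_iff₀ ht]
      have hdir' : (⟪ξ, d⟫ - ε / 2) * t < f (xb + t • d) - f xb := (lt_div_iff₀ ht).1 hdir
      linarith [habs1.1, hdir'.le, mul_le_mul_of_nonneg_left habs2.2 ht.le,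
        mul_le_mul_of_nonneg_left hKρ ht.le]
    exact_mod_cast hmain
  -- Part B : frechetSub ⊆ tangSub
  have hB : frechetSub f xb ⊆ tangSub f' := by
    intro ξ hξ d
    by_cases hd : d = 0
    · subst hd
      have h0 : f' 0 = 0 := by
        have h1 : Tendsto (fun t : ℝ => (f (xb + t • (0 : En n)) - f xb) / t) (𝓝[>] 0)
            (𝓝 (f' 0)) := hderiv 0
        have h2 : (fun t : ℝ => (f (xb + t • (0 : En n)) - f xb) / t) = fun _ => (0:ℝ) := by
          funext t; simp
        rw [h2] at h1
        exact tendsto_nhds_unique h1 tendsto_const_nhds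
      simp [h0]
    · have hdn : (0:ℝ) < ‖d‖ := norm_pos_iff.2 hd
      set φ : ℝ → En n := fun t => xb + t • d with hφdef
      have hmap : Tendsto φ (𝓝[>] (0:ℝ)) (𝓝[≠] xb) := by
        rw [tendsto_nhdsWithin_iff]
        constructor
        · have h1 : Tendsto φ (𝓝 0) (𝓝 (xb + (0:ℝ) • d)) := by
            exact tendsto_const_nhds.add (tendsto_id.smul tendsto_const_nhds)
          simp only [zero_smul, add_zero] at h1
          exact h1.mono_left nhdsWithin_le_nhds
        · filter_upwards [self_mem_nhdsWithin] with t ht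
          simp only [mem_compl_iff, mem_singleton_iff]
          intro hcon
          have : t • d = 0 := by
            have := hcon
            rw [hφdef] at this
            simpa using this
          rcases smul_eq_zero.1 this with h | h
          · exact (mem_Ioi.1 ht).ne' h
          · exact hd h
      set g : En n → EReal :=
        fun y => (((f y - f xb - ⟪ξ, y - xb⟫) / ‖y - xb‖ : ℝ) : EReal) with hgdef
      have hlim : (0 : EReal) ≤ liminf (g ∘ φ) (𝓝[>] (0:ℝ)) := by
        calc (0 : EReal) ≤ liminf g (𝓝[≠] xb) := hξ
          _ ≤ liminf g (Filter.map φ (𝓝[>] (0:ℝ))) := liminf_le_liminf_of_le hmap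
          _ = liminf (g ∘ φ) (𝓝[>] (0:ℝ)) := liminf_map_aux g φ _
      have htend : Tendsto (fun t : ℝ =>
          ((f (xb + t • d) - f xb - ⟪ξ, (xb + t • d) - xb⟫) / ‖(xb + t • d) - xb‖ : ℝ))
          (𝓝[>] (0:ℝ)) (𝓝 ((f' d - ⟪ξ, d⟫) / ‖d‖)) := by
        have h1 : Tendsto (fun t : ℝ => ((f (xb + t • d) - f xb) / t - ⟪ξ, d⟫) / ‖d‖)
            (𝓝[>] (0:ℝ)) (𝓝 ((f' d - ⟪ξ, d⟫) / ‖d‖)) :=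
          ((hderiv d).sub tendsto_const_nhds).div_const _
        refine h1.congr' ?_
        filter_upwards [self_mem_nhdsWithin] with t ht
        have ht0 : (0:ℝ) < t := ht
        rw [add_sub_cancel_left, norm_smul, Real.norm_eq_abs, abs_of_pos ht0,
          real_inner_smul_right]
        field_simp
      have htendE : Tendsto (g ∘ φ) (𝓝[>] (0:ℝ)) (𝓝 (((f' d - ⟪ξ, d⟫) / ‖d‖ : ℝ) : EReal)) := by
        exact (EReal.tendsto_coe.2 htend)
      have heq : liminf (g ∘ φ) (𝓝[>] (0:ℝ)) = (((f' d - ⟪ξ, d⟫) / ‖d‖ : ℝ) : EReal) :=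
        htendE.liminf_eq
      rw [heq] at hlim
      have hreal : (0:ℝ) ≤ (f' d - ⟪ξ, d⟫) / ‖d‖ := by exact_mod_cast hlim
      have := (le_div_iff₀ hdn).1 hreal
      linarith
  exact ⟨hA, Set.Subset.antisymm hB hA⟩
end
end

section
/- Let {ψ_ν = g_ν − h_ν : ν ∈ V} be a family of functions on ℝⁿ, where the g_ν and h_ν satisfy assumptions A1–A5 (in particular g_ν(x) ≥ 0 and h_ν(x) ≥ 0 for all x and ν). For each finite subset F ⊆ V define g_F(x) := max_{ν∈F} ( g_ν(x) + Σ_{ω∈F∖{ν}} h_ω(x) ) and h_F(x) := Σ_{ω∈F} h_ω(x), and set g(x) := sup_{F finite ⊆ V} g_F(x), h(x) := sup_{F finite ⊆ V} h_F(x). Then for every x with h(x) < +∞ one has sup_{ν∈V} ψ_ν(x) = g(x) − h(x); in particular the supremum function ψ := sup_{ν∈V} ψ_ν is a difference of two tangentially convex functions on the effective domain of h. -/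
open Filter Topology Set Metric
open scoped Pointwise RealInnerProductSpace Classical

noncomputable section

/-- for a family `ψ_ν = g_ν − h_ν` (ν ∈ V) satisfying A1–A5, with
`g_F(x) := max_{ν∈F} (g_ν(x) + Σ_{ω∈F∖{ν}} h_ω(x))`, `h_F(x) := Σ_{ω∈F} h_ω(x)`,
`g(x) := sup_F g_F(x)` and `h(x) := sup_F h_F(x)` (suprema over finite subsets of `V`,
computed in `EReal`), one has `sup_{ν∈V} ψ_ν(x) = g(x) − h(x)` whenever `h(x) < +∞`. -/
theorem statement4 {n q : ℕ} (V : Set (En q)) (hV : IsCompact V) (hVne : V.Nonempty)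
    (g h : En n → En q → ℝ) (g' h' : En n → En q → En n → ℝ)
    -- (A1)
    (hA1g : UpperSemicontinuousOn (fun p : En n × En q => g p.1 p.2) (Set.univ ×ˢ V))
    (hA1h : LowerSemicontinuousOn (fun p : En n × En q => h p.1 p.2) (Set.univ ×ˢ V))
    -- (A2)
    (hA2 : ∀ x : En n, ∃ δ > (0 : ℝ), ∃ K > (0 : ℝ), ∀ y ∈ Metric.ball x δ,
      ∀ z ∈ Metric.ball x δ, ∀ v ∈ V,
        |g y v - g z v| ≤ K * ‖y - z‖ ∧ |h y v - h z v| ≤ K * ‖y - z‖)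
    -- (A3)
    (hA3g : ∀ x : En n, ∀ v ∈ V, (∀ d, HasDirDeriv (fun y => g y v) x d (g' x v d)) ∧
      ConvexOn ℝ Set.univ (g' x v))
    (hA3h : ∀ x : En n, ∀ v ∈ V, (∀ d, HasDirDeriv (fun y => h y v) x d (h' x v d)) ∧
      ConvexOn ℝ Set.univ (h' x v))
    -- (A4)
    (hA4g : ∀ (x : En n) (d : En n), UpperSemicontinuousOn (fun v => g' x v d) V)
    (hA4h : ∀ (x : En n) (d : En n), LowerSemicontinuousOn (fun v => h' x v d) V)
    -- (A5) nonnegativity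
    (hA5 : ∀ (x : En n), ∀ v ∈ V, 0 ≤ g x v ∧ 0 ≤ h x v) :
    ∀ x : En n,
      (⨆ (F : Finset (En q)) (_ : ↑F ⊆ V ∧ F.Nonempty),
          ((∑ ω ∈ F, h x ω : ℝ) : EReal)) < ⊤ →
      (⨆ (ν : En q) (_ : ν ∈ V), ((g x ν - h x ν : ℝ) : EReal))
        = (⨆ (F : Finset (En q)) (_ : ↑F ⊆ V ∧ F.Nonempty),
            ((sSup ((fun ν => g x ν + ∑ ω ∈ F.erase ν, h x ω) '' (↑F : Set (En q))) : ℝ) : EReal))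
          - (⨆ (F : Finset (En q)) (_ : ↑F ⊆ V ∧ F.Nonempty),
              ((∑ ω ∈ F, h x ω : ℝ) : EReal)) := by
  intro x hHtop
  classical
  obtain ⟨ν₀, hν₀⟩ := hVne
  set S : EReal := ⨆ (ν : En q) (_ : ν ∈ V), ((g x ν - h x ν : ℝ) : EReal) with hS
  set G : EReal := ⨆ (F : Finset (En q)) (_ : ↑F ⊆ V ∧ F.Nonempty),
      ((sSup ((fun ν => g x ν + ∑ ω ∈ F.erase ν, h x ω) '' (↑F : Set (En q))) : ℝ) : EReal)
    with hG
  set H : EReal := ⨆ (F : Finset (En q)) (_ : ↑F ⊆ V ∧ F.Nonempty),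
      ((∑ ω ∈ F, h x ω : ℝ) : EReal) with hH
  -- key inequality: for any ν ∈ V and admissible F, ψ_ν + h_F ≤ G
  have hKey : ∀ ν ∈ V, ∀ F : Finset (En q), ↑F ⊆ V → F.Nonempty →
      ((g x ν - h x ν + ∑ ω ∈ F, h x ω : ℝ) : EReal) ≤ G := by
    intro ν hν F hFV hFne
    have hF' : ((insert ν F : Finset (En q)) : Set (En q)) ⊆ V := by
      rw [Finset.coe_insert]
      exact Set.insert_subset hν hFV
    have h1 : ((sSup ((fun μ => g x μ + ∑ ω ∈ (insert ν F).erase μ, h x ω) ''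
        ((insert ν F : Finset (En q)) : Set (En q))) : ℝ) : EReal) ≤ G :=
      le_iSup₂ (f := fun (F : Finset (En q)) (_ : ↑F ⊆ V ∧ F.Nonempty) =>
          ((sSup ((fun ν => g x ν + ∑ ω ∈ F.erase ν, h x ω) '' (↑F : Set (En q))) : ℝ) : EReal))
        (insert ν F) ⟨hF', Finset.insert_nonempty _ _⟩
    have hbdd : BddAbove ((fun μ => g x μ + ∑ ω ∈ (insert ν F).erase μ, h x ω) ''
        ((insert ν F : Finset (En q)) : Set (En q))) :=
      ((Finset.finite_toSet _).image _).bddAbove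
    have hmem : g x ν + ∑ ω ∈ (insert ν F).erase ν, h x ω ∈
        (fun μ => g x μ + ∑ ω ∈ (insert ν F).erase μ, h x ω) ''
        ((insert ν F : Finset (En q)) : Set (En q)) :=
      ⟨ν, by simp, rfl⟩
    have h2 : g x ν + ∑ ω ∈ (insert ν F).erase ν, h x ω ≤
        sSup ((fun μ => g x μ + ∑ ω ∈ (insert ν F).erase μ, h x ω) ''
        ((insert ν F : Finset (En q)) : Set (En q))) := le_csSup hbdd hmem
    have h3 : g x ν - h x ν + ∑ ω ∈ F, h x ω ≤
        g x ν + ∑ ω ∈ (insert ν F).erase ν, h x ω := by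
      rw [Finset.erase_insert_eq_erase]
      by_cases hmemF : ν ∈ F
      · rw [Finset.sum_erase_eq_sub hmemF]; ring_nf; exact le_refl _
      · rw [Finset.erase_eq_of_notMem hmemF]
        have := (hA5 x ν hν).2
        linarith
    exact le_trans (EReal.coe_le_coe_iff.mpr (h3.trans h2)) h1
  -- H is a real number
  have hH0 : ((h x ν₀ : ℝ) : EReal) ≤ H := by
    have := le_iSup₂ (f := fun (F : Finset (En q)) (_ : ↑F ⊆ V ∧ F.Nonempty) =>
        ((∑ ω ∈ F, h x ω : ℝ) : EReal)) ({ν₀} : Finset (En q))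
      ⟨by simpa using hν₀, Finset.singleton_nonempty _⟩
    simpa using this
  have hHbot : H ≠ ⊥ := fun hb => by
    rw [hb, le_bot_iff] at hH0
    exact EReal.coe_ne_bot _ hH0
  obtain ⟨r, hHr⟩ : ∃ r : ℝ, H = (r : EReal) :=
    ⟨H.toReal, (EReal.coe_toReal (ne_of_lt hHtop) hHbot).symm⟩
  -- S is not ⊥
  have hS0 : ((g x ν₀ - h x ν₀ : ℝ) : EReal) ≤ S :=
    le_iSup₂ (f := fun (ν : En q) (_ : ν ∈ V) => ((g x ν - h x ν : ℝ) : EReal)) ν₀ hν₀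
  have hSbot : S ≠ ⊥ := fun hb => by
    rw [hb, le_bot_iff] at hS0
    exact EReal.coe_ne_bot _ hS0
  by_cases hStop : S = ⊤
  · -- then G = ⊤ as well
    have hGtop : G = ⊤ := by
      rw [EReal.eq_top_iff_forall_lt]
      intro M
      have hMS : (M : EReal) < S := by rw [hStop]; exact EReal.coe_lt_top M
      rw [hS, lt_iSup_iff] at hMS
      obtain ⟨ν, hMν⟩ := hMS
      rw [lt_iSup_iff] at hMν
      obtain ⟨hν, hMν⟩ := hMν
      have hk := hKey ν hν {ν} (by simpa using hν) (Finset.singleton_nonempty _)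
      have hle : ((g x ν - h x ν : ℝ) : EReal) ≤
          ((g x ν - h x ν + ∑ ω ∈ ({ν} : Finset (En q)), h x ω : ℝ) : EReal) := by
        have := (hA5 x ν hν).2
        apply EReal.coe_le_coe_iff.mpr
        simp only [Finset.sum_singleton]
        linarith
      exact lt_of_lt_of_le hMν (hle.trans hk)
    rw [hStop, hGtop, hHr, EReal.top_sub_coe]
  · obtain ⟨s, hSr⟩ : ∃ s : ℝ, S = (s : EReal) :=
      ⟨S.toReal, (EReal.coe_toReal hStop hSbot).symm⟩
    -- G ≤ s + r
    have hG1 : G ≤ ((s + r : ℝ) : EReal) := by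
      rw [hG]
      apply iSup₂_le
      intro F hF
      apply EReal.coe_le_coe_iff.mpr
      apply csSup_le (by simpa [Set.image_nonempty] using hF.2)
      rintro a ⟨ν, hνF, rfl⟩
      have hνF' : ν ∈ F := by exact_mod_cast hνF
      have hνV : ν ∈ V := hF.1 hνF
      have hψ : g x ν - h x ν ≤ s := by
        have := le_iSup₂ (f := fun (ν : En q) (_ : ν ∈ V) =>
            ((g x ν - h x ν : ℝ) : EReal)) ν hνV
        rw [← hS, hSr] at this
        exact_mod_cast this
      have hsumF : ∑ ω ∈ F, h x ω ≤ r := by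
        have := le_iSup₂ (f := fun (F : Finset (En q)) (_ : ↑F ⊆ V ∧ F.Nonempty) =>
            ((∑ ω ∈ F, h x ω : ℝ) : EReal)) F hF
        rw [← hH, hHr] at this
        exact_mod_cast this
      have hsum : g x ν + ∑ ω ∈ F.erase ν, h x ω = g x ν - h x ν + ∑ ω ∈ F, h x ω := by
        rw [Finset.sum_erase_eq_sub hνF']; ring
      show g x ν + ∑ ω ∈ F.erase ν, h x ω ≤ s + r
      linarith [hsum]
    -- G ≥ s + r
    have hG2 : ((s + r : ℝ) : EReal) ≤ G := by
      by_contra hlt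
      push_neg at hlt
      have hGbot : G ≠ ⊥ := by
        intro hb
        have := hKey ν₀ hν₀ {ν₀} (by simpa using hν₀) (Finset.singleton_nonempty _)
        rw [hb, le_bot_iff] at this
        exact EReal.coe_ne_bot _ this
      obtain ⟨t, hGt⟩ : ∃ t : ℝ, G = (t : EReal) :=
        ⟨G.toReal, (EReal.coe_toReal (ne_top_of_lt hlt) hGbot).symm⟩
      have htlt : t < s + r := by rw [hGt] at hlt; exact_mod_cast hlt
      set ε : ℝ := (s + r - t) / 2 with hε
      have hεpos : 0 < ε := by rw [hε]; linarith
      -- choose ν with ψ ν > s - ε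
      have h1 : ((s - ε : ℝ) : EReal) < S := by
        rw [hSr]; exact_mod_cast (by linarith : s - ε < s)
      rw [hS, lt_iSup_iff] at h1
      obtain ⟨ν, h1⟩ := h1
      rw [lt_iSup_iff] at h1
      obtain ⟨hν, h1⟩ := h1
      have h1' : s - ε < g x ν - h x ν := by exact_mod_cast h1
      -- choose F with h_F > r - ε
      have h2 : ((r - ε : ℝ) : EReal) < H := by
        rw [hHr]; exact_mod_cast (by linarith : r - ε < r)
      rw [hH, lt_iSup_iff] at h2
      obtain ⟨F, h2⟩ := h2
      rw [lt_iSup_iff] at h2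
      obtain ⟨hF, h2⟩ := h2
      have h2' : r - ε < ∑ ω ∈ F, h x ω := by exact_mod_cast h2
      have hk := hKey ν hν F hF.1 hF.2
      rw [hGt] at hk
      have hk' : g x ν - h x ν + ∑ ω ∈ F, h x ω ≤ t := by exact_mod_cast hk
      have : s + r - 2 * ε < t := by linarith
      rw [hε] at this
      linarith
    have hGval : G = ((s + r : ℝ) : EReal) := le_antisymm hG1 hG2
    rw [hSr, hGval, hHr, ← EReal.coe_sub]
    norm_num
end
end

section
/- If the generalized error bound constraint qualification (GEBCQ) holds at a feasible point x̄ ∈ S, then the generalized Abadie constraint qualification (GACQ) holds at x̄, i.e. G'(x̄) ⊆ T(x̄;S). -/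
open Filter Topology Set Metric
open scoped Pointwise RealInnerProductSpace Classical

noncomputable section

/-- The `j`-th constraint function `ψ_j(x) = max_{v ∈ V_j} g_j(x,v)`. -/
def psiC {n m : ℕ} {qc : Fin m → ℕ} (gc : ∀ j, En n → En (qc j) → ℝ)
    (Vc : ∀ j, Set (En (qc j))) (j : Fin m) (x : En n) : ℝ :=
  sSup ((fun v => gc j x v) '' Vc j)

/-- The robust feasible set `S = {x : ψ_j(x) ≤ 0, j = 1,…,m}`. -/
def feasSet {n m : ℕ} {qc : Fin m → ℕ} (gc : ∀ j, En n → En (qc j) → ℝ)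
    (Vc : ∀ j, Set (En (qc j))) : Set (En n) :=
  {x | ∀ j, psiC gc Vc j x ≤ 0}

/-- The active uncertainty set `V_j(x) = {v ∈ V_j : ψ_j(x) = g_j(x,v)}`. -/
def activeC {n m : ℕ} {qc : Fin m → ℕ} (gc : ∀ j, En n → En (qc j) → ℝ)
    (Vc : ∀ j, Set (En (qc j))) (j : Fin m) (x : En n) : Set (En (qc j)) :=
  {v ∈ Vc j | psiC gc Vc j x = gc j x v}

/-- The contingent (Bouligand tangent) cone `T(x;S)`. -/
def contingentCone {n : ℕ} (S : Set (En n)) (x : En n) : Set (En n) :=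
  {d | ∃ (t : ℕ → ℝ) (dk : ℕ → En n), (∀ k, 0 < t k) ∧ Tendsto t atTop (𝓝 0) ∧
    Tendsto dk atTop (𝓝 d) ∧ ∀ k, x + t k • dk k ∈ S}

set_option maxHeartbeats 2000000 in
/-- if GEBCQ holds at a feasible point `xb ∈ S`, then GACQ holds at `xb`,
i.e. the linearized cone `G'(xb) = {d : ψ_j'(xb;d) ≤ 0 ∀ j ∈ J(xb)}` is contained in the
contingent cone `T(xb;S)`. -/
theorem statement12 {n m : ℕ} {qc : Fin m → ℕ}
    (Vc : ∀ j, Set (En (qc j))) (gc : ∀ j, En n → En (qc j) → ℝ)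
    (gc' : ∀ j, En n → En (qc j) → En n → ℝ)
    (hVc : ∀ j, IsCompact (Vc j)) (hVcne : ∀ j, (Vc j).Nonempty)
    -- each g_j is u.s.c. in (x,v)
    (hA1c : ∀ j, UpperSemicontinuousOn
      (fun p : En n × En (qc j) => gc j p.1 p.2) (Set.univ ×ˢ Vc j))
    -- each g_j is locally Lipschitz in x uniformly in v ∈ V_j
    (hA2c : ∀ j, ∀ x : En n, ∃ δ > (0 : ℝ), ∃ K > (0 : ℝ), ∀ y ∈ Metric.ball x δ,
      ∀ z ∈ Metric.ball x δ, ∀ v ∈ Vc j, |gc j y v - gc j z v| ≤ K * ‖y - z‖)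
    -- partial directional derivatives exist, are finite and convex in the direction
    (hA3c : ∀ j, ∀ x : En n, ∀ v ∈ Vc j,
      (∀ d, HasDirDeriv (fun y => gc j y v) x d (gc' j x v d)) ∧
        ConvexOn ℝ Set.univ (gc' j x v))
    -- v ↦ (g_j)'_x(x,v;d) is u.s.c.
    (hA4c : ∀ j, ∀ (x d : En n), UpperSemicontinuousOn (fun v => gc' j x v d) (Vc j))
    (xb : En n) (hxb : xb ∈ feasSet gc Vc)
    -- ψ_j'(xb;·), the directional derivatives of the constraint functions at xb
    (psi' : Fin m → En n → ℝ)
    (hpsi' : ∀ j, ∀ d : En n, HasDirDeriv (psiC gc Vc j) xb d (psi' j d))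
    -- GEBCQ at xb
    (hGEB : ∃ δ > (0 : ℝ), ∃ σ > (0 : ℝ), ∀ x : En n, ‖x - xb‖ ≤ δ →
      x ∉ feasSet gc Vc →
      Metric.infDist x (feasSet gc Vc) ≤
        σ * ∑ j ∈ Finset.univ.filter (fun j => psiC gc Vc j xb = 0),
          max (psiC gc Vc j x) 0) :
    {d : En n | ∀ j, psiC gc Vc j xb = 0 → psi' j d ≤ 0}
      ⊆ contingentCone (feasSet gc Vc) xb := by
  intro d hd
  obtain ⟨δ, hδ, σ, hσ, hbd⟩ := hGEB
  set S := feasSet gc Vc with hS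
  set A := Finset.univ.filter (fun j => psiC gc Vc j xb = 0) with hA
  set f : ℝ → ℝ := fun s => σ * ∑ j ∈ A, max (psiC gc Vc j (xb + s • d)) 0 with hf
  have hSne : S.Nonempty := ⟨xb, hxb⟩
  have hfnn : ∀ s, 0 ≤ f s := by
    intro s
    apply mul_nonneg hσ.le
    exact Finset.sum_nonneg fun j _ => le_max_right _ _
  set c : ℝ := δ / (‖d‖ + 1) with hc
  have hcpos : 0 < c := div_pos hδ (by positivity)
  set t : ℕ → ℝ := fun k => c / (k + 1) with ht
  have htpos : ∀ k, 0 < t k := fun k => div_pos hcpos (by positivity)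
  have ht0 : Tendsto t atTop (𝓝 0) := by
    have : Tendsto (fun k : ℕ => (k : ℝ) + 1) atTop atTop :=
      tendsto_natCast_atTop_atTop.atTop_add tendsto_const_nhds
    simpa [ht] using Tendsto.div_atTop (tendsto_const_nhds (x := c)) this
  have htle : ∀ k, t k ≤ c := by
    intro k
    rw [ht]
    calc c / ((k : ℝ) + 1) ≤ c / 1 := by
          apply div_le_div_of_nonneg_left hcpos.le one_pos
          simp
      _ = c := by ring
  -- distance bound from GEBCQ
  have hinf : ∀ k, Metric.infDist (xb + t k • d) S ≤ f (t k) := by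
    intro k
    by_cases hmem : xb + t k • d ∈ S
    · simpa [Metric.infDist_zero_of_mem hmem] using hfnn (t k)
    · have hnorm : ‖(xb + t k • d) - xb‖ ≤ δ := by
        have : ‖(xb + t k • d) - xb‖ = t k * ‖d‖ := by
          simp [norm_smul, abs_of_pos (htpos k)]
        rw [this]
        calc t k * ‖d‖ ≤ c * (‖d‖ + 1) := by
              apply mul_le_mul (htle k) (by linarith [norm_nonneg d]) (norm_nonneg d)
                hcpos.le
          _ = δ := by
              rw [hc, div_mul_cancel₀ _ (by positivity : ‖d‖ + 1 ≠ 0)]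
      exact hbd _ hnorm hmem
  -- choose near points in S
  have hchoose : ∀ k, ∃ y ∈ S, dist (xb + t k • d) y < f (t k) + (t k)^2 := by
    intro k
    have : Metric.infDist (xb + t k • d) S < f (t k) + (t k)^2 :=
      lt_of_le_of_lt (hinf k) (by nlinarith [htpos k])
    exact (Metric.infDist_lt_iff hSne).mp this
  choose y hyS hyd using hchoose
  set dk : ℕ → En n := fun k => (t k)⁻¹ • (y k - xb) with hdk
  -- f(s)/s → 0 as s → 0+
  have hterm : ∀ j ∈ A, Tendsto (fun s : ℝ => max (psiC gc Vc j (xb + s • d)) 0 / s)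
      (𝓝[>] (0:ℝ)) (𝓝 0) := by
    intro j hj
    have hj0 : psiC gc Vc j xb = 0 := by
      simpa [hA] using hj
    have h1 : Tendsto (fun s : ℝ => psiC gc Vc j (xb + s • d) / s) (𝓝[>] (0:ℝ))
        (𝓝 (psi' j d)) := by
      have := hpsi' j d
      unfold HasDirDeriv at this
      simpa [hj0] using this
    have h2 : Tendsto (fun s : ℝ => max (psiC gc Vc j (xb + s • d) / s) 0) (𝓝[>] (0:ℝ))
        (𝓝 0) := by
      have := h1.max (tendsto_const_nhds (x := (0:ℝ)))
      rwa [max_eq_right (hd j hj0)] at this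
    apply h2.congr'
    filter_upwards [self_mem_nhdsWithin] with s hs
    rw [Set.mem_Ioi] at hs
    rw [← max_div_div_right hs.le, zero_div]
  have hfs : Tendsto (fun s : ℝ => f s / s) (𝓝[>] (0:ℝ)) (𝓝 0) := by
    have hsum : Tendsto (fun s : ℝ => ∑ j ∈ A, max (psiC gc Vc j (xb + s • d)) 0 / s)
        (𝓝[>] (0:ℝ)) (𝓝 0) := by
      have := tendsto_finset_sum A hterm
      simpa using this
    have := hsum.const_mul σ
    simp only [mul_zero] at this
    apply this.congr
    intro s
    rw [hf]
    simp [Finset.sum_div, Finset.mul_sum, mul_div_assoc]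
  -- the sequence t tends to 0 within Ioi 0
  have htW : Tendsto t atTop (𝓝[>] (0:ℝ)) :=
    tendsto_nhdsWithin_of_tendsto_nhds_of_eventually_within _ ht0
      (Eventually.of_forall fun k => htpos k)
  have hg : Tendsto (fun k => f (t k) / t k + t k) atTop (𝓝 0) := by
    have := (hfs.comp htW).add ht0
    simpa using this
  -- dk → d
  have hdkd : Tendsto dk atTop (𝓝 d) := by
    rw [tendsto_iff_norm_sub_tendsto_zero]
    apply squeeze_zero (fun k => norm_nonneg _) _ hg
    intro k
    have htk := htpos k
    have htkne : t k ≠ 0 := htk.ne'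
    have : dk k - d = (t k)⁻¹ • (y k - (xb + t k • d)) := by
      rw [hdk]
      match_scalars <;> field_simp
    rw [this, norm_smul, norm_inv, Real.norm_eq_abs, abs_of_pos htk]
    have hdist : ‖y k - (xb + t k • d)‖ < f (t k) + (t k)^2 := by
      rw [norm_sub_rev, ← dist_eq_norm]
      exact hyd k
    calc (t k)⁻¹ * ‖y k - (xb + t k • d)‖ ≤ (t k)⁻¹ * (f (t k) + (t k)^2) := by
          apply mul_le_mul_of_nonneg_left hdist.le (inv_nonneg.mpr htk.le)
      _ = f (t k) / t k + t k := by
          field_simp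
  refine ⟨t, dk, htpos, ht0, hdkd, fun k => ?_⟩
  have htkne : t k ≠ 0 := (htpos k).ne'
  have : xb + t k • dk k = y k := by
    rw [hdk]
    match_scalars <;> field_simp <;> ring
  rw [this]
  exact hyS k
end
end

section
/- Let f : ℝⁿ → ℝ be tangentially convex at x̄. Then for every ε ≥ 0, the ε-T-subdifferential satisfies ∂_T^ε f(x̄) = ∂_T f(x̄) + ε·𝔹, where 𝔹 is the closed unit ball of ℝⁿ and the sum is a Minkowski sum. -/
open Filter Topology Set Metric
open scoped Pointwise RealInnerProductSpace Classical

noncomputable section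

/-- The directional derivative in direction `0` is `0`. -/
lemma dd_zero {n : ℕ} {f : En n → ℝ} {x : En n} {L : ℝ}
    (h : HasDirDeriv f x 0 L) : L = 0 := by
  have h2 : Tendsto (fun t : ℝ => (f (x + t • (0 : En n)) - f x) / t) (𝓝[>] 0) (𝓝 0) := by
    have : (fun t : ℝ => (f (x + t • (0 : En n)) - f x) / t) = fun _ => 0 := by
      funext t; simp
    rw [this]; exact tendsto_const_nhds
  exact tendsto_nhds_unique h h2

/-- Positive homogeneity of the directional derivative. -/
lemma dd_smul {n : ℕ} {f : En n → ℝ} {x d : En n} {L M : ℝ} {c : ℝ} (hc : 0 < c)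
    (h : HasDirDeriv f x d L) (h2 : HasDirDeriv f x (c • d) M) : M = c * L := by
  have hmap : Tendsto (fun t : ℝ => c * t) (𝓝[>] 0) (𝓝[>] 0) := by
    apply tendsto_nhdsWithin_of_tendsto_nhds_of_eventually_within
    · have : Tendsto (fun t : ℝ => c * t) (𝓝 0) (𝓝 (c * 0)) :=
        (continuous_const.mul continuous_id).tendsto 0
      simpa using this.mono_left nhdsWithin_le_nhds
    · filter_upwards [self_mem_nhdsWithin] with t ht
      exact mul_pos hc ht
  have h3 := (h.comp hmap).const_mul c
  have heq : (fun t : ℝ => c * ((f (x + (c * t) • d) - f x) / (c * t)))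
      = fun t : ℝ => (f (x + t • (c • d)) - f x) / t := by
    funext t
    have : (c * t) • d = t • (c • d) := by rw [mul_comm, mul_smul]
    rw [this]
    rcases eq_or_ne t 0 with rfl | ht
    · simp
    · field_simp
  rw [show ((fun t : ℝ => (f (x + t • d) - f x) / t) ∘ fun t => c * t)
      = fun t : ℝ => (f (x + (c * t) • d) - f x) / (c * t) from rfl, heq] at h3
  exact tendsto_nhds_unique h2 h3

/-- if `f : ℝⁿ → ℝ` is tangentially convex at `xb` (with directional
derivative function `f'`), then for every `ε ≥ 0`,
`∂_T^ε f(xb) = ∂_T f(xb) + ε·𝔹`. -/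
theorem statement16 {n : ℕ} (f : En n → ℝ) (xb : En n)
    (f' : En n → ℝ)
    (hderiv : ∀ d : En n, HasDirDeriv f xb d (f' d))
    (hconv : ConvexOn ℝ Set.univ f')
    (ε : ℝ) (hε : 0 ≤ ε) :
    {ξ : En n | ∀ d : En n, ⟪ξ, d⟫ ≤ f' d + ε * ‖d‖}
      = tangSub f' + ε • Metric.closedBall (0 : En n) 1 := by
  -- basic properties of f'
  have hf0 : f' 0 = 0 := dd_zero (hderiv 0)
  have hfhom : ∀ c : ℝ, 0 < c → ∀ d, f' (c • d) = c * f' d :=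
    fun c hc d => dd_smul hc (hderiv d) (hderiv (c • d))
  have hfsub : ∀ u v : En n, f' (u + v) ≤ f' u + f' v := by
    intro u v
    have h1 : f' ((1/2 : ℝ) • u + (1/2 : ℝ) • v) ≤ (1/2) * f' u + (1/2) * f' v := by
      have := hconv.2 (mem_univ u) (mem_univ v)
        (by norm_num : (0:ℝ) ≤ 1/2) (by norm_num : (0:ℝ) ≤ 1/2) (by norm_num)
      simpa [smul_eq_mul] using this
    have h2 : f' (u + v) = 2 * f' ((1/2 : ℝ) • u + (1/2 : ℝ) • v) := by
      have := hfhom 2 (by norm_num) ((1/2 : ℝ) • u + (1/2 : ℝ) • v)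
      rw [← this]
      congr 1
      rw [smul_add, smul_smul, smul_smul]
      norm_num
    linarith
  ext ξ
  simp only [Set.mem_setOf_eq]
  constructor
  · -- hard direction
    intro hξ
    set g : En n → ℝ := fun u => ⟪ξ, u⟫ - ε * ‖u‖ with hg_def
    have hg_le : ∀ u, g u ≤ f' u := by
      intro u; have := hξ u; simp only [hg_def]; linarith
    have hg0 : g 0 = 0 := by simp [hg_def]
    have hg_super : ∀ u v, g u + g v ≤ g (u + v) := by
      intro u v
      have h1 : ε * ‖u + v‖ ≤ ε * (‖u‖ + ‖v‖) :=
        mul_le_mul_of_nonneg_left (norm_add_le u v) hε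
      simp only [hg_def, inner_add_right]
      linarith
    have hg_hom : ∀ c : ℝ, 0 < c → ∀ u, g (c • u) = c * g u := by
      intro c hc u
      simp only [hg_def, real_inner_smul_right, norm_smul, Real.norm_eq_abs,
        abs_of_pos hc]
      ring
    set F : En n → En n → ℝ := fun w u => f' (w + u) - g u with hF_def
    have hFlb : ∀ w u, g w ≤ F w u := by
      intro w u
      have h1 := hg_super w u
      have h2 := hg_le (w + u)
      simp only [hF_def]
      linarith
    have hbdd : ∀ w, BddBelow (range (F w)) := by
      intro w
      exact ⟨g w, by rintro x ⟨u, rfl⟩; exact hFlb w u⟩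
    set N : En n → ℝ := fun w => ⨅ u, F w u with hN_def
    have hN_le_F : ∀ w u, N w ≤ F w u := fun w u => ciInf_le (hbdd w) u
    have hN_ge : ∀ w, g w ≤ N w := fun w => le_ciInf (hFlb w)
    have hN_le : ∀ w, N w ≤ f' w := by
      intro w
      have := hN_le_F w 0
      simpa [hF_def, hg0] using this
    -- sublinearity of N
    have N_hom : ∀ c : ℝ, 0 < c → ∀ w, N (c • w) = c * N w := by
      intro c hc w
      have hFc : ∀ u, F (c • w) (c • u) = c * F w u := by
        intro u
        simp only [hF_def, ← smul_add, hfhom c hc, hg_hom c hc]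
        ring
      have key : range (F (c • w)) = c • range (F w) := by
        ext x
        constructor
        · rintro ⟨u, rfl⟩
          refine ⟨F w (c⁻¹ • u), ⟨c⁻¹ • u, rfl⟩, ?_⟩
          have h5 : c • c⁻¹ • u = u := by rw [smul_smul, mul_inv_cancel₀ hc.ne', one_smul]
          show c • F w (c⁻¹ • u) = F (c • w) u
          rw [smul_eq_mul, ← hFc (c⁻¹ • u), h5]
        · rintro ⟨_, ⟨u, rfl⟩, rfl⟩
          refine ⟨c • u, ?_⟩
          show F (c • w) (c • u) = c • F w u
          rw [hFc u, smul_eq_mul]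
      calc N (c • w) = sInf (range (F (c • w))) := by
            simp only [hN_def]; exact sInf_range.symm
        _ = sInf (c • range (F w)) := by rw [key]
        _ = c • sInf (range (F w)) := Real.sInf_smul_of_nonneg hc.le _
        _ = c * N w := by
            simp only [hN_def, smul_eq_mul]
            rw [sInf_range]
    have N_add : ∀ w₁ w₂, N (w₁ + w₂) ≤ N w₁ + N w₂ := by
      intro w₁ w₂
      have key : ∀ u₁ u₂, N (w₁ + w₂) ≤ F w₁ u₁ + F w₂ u₂ := by
        intro u₁ u₂
        have h1 := hN_le_F (w₁ + w₂) (u₁ + u₂)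
        have h2 : f' (w₁ + w₂ + (u₁ + u₂)) ≤ f' (w₁ + u₁) + f' (w₂ + u₂) := by
          have := hfsub (w₁ + u₁) (w₂ + u₂)
          have heq : w₁ + u₁ + (w₂ + u₂) = w₁ + w₂ + (u₁ + u₂) := by abel
          rwa [heq] at this
        have h3 := hg_super u₁ u₂
        simp only [hF_def] at h1 ⊢
        linarith
      have step1 : ∀ u₂, N (w₁ + w₂) - F w₂ u₂ ≤ N w₁ := by
        intro u₂
        apply le_ciInf
        intro u₁
        have := key u₁ u₂
        linarith
      have step2 : N (w₁ + w₂) - N w₁ ≤ N w₂ := by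
        apply le_ciInf
        intro u₂
        have := step1 u₂
        linarith
      linarith
    -- Hahn–Banach
    have hf_pmap : ∀ x : (LinearPMap.mk (⊥ : Submodule ℝ (En n)) 0 :
        (En n) →ₗ.[ℝ] ℝ).domain, (LinearPMap.mk (⊥ : Submodule ℝ (En n)) 0 :
        (En n) →ₗ.[ℝ] ℝ) x ≤ N x := by
      rintro ⟨x, hx⟩
      have hx0 : x = 0 := Submodule.mem_bot ℝ |>.mp hx
      have : (0 : ℝ) ≤ N x := by
        rw [hx0]
        have := hN_ge 0
        rw [hg0] at this
        exact this
      simpa using this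
    obtain ⟨ℓ, -, hℓ⟩ := exists_extension_of_le_sublinear
      (LinearPMap.mk (⊥ : Submodule ℝ (En n)) 0) N N_hom N_add hf_pmap
    set η : En n := (InnerProductSpace.toDual ℝ (En n)).symm
      (LinearMap.toContinuousLinearMap ℓ) with hη_def
    have hηd : ∀ d, ⟪η, d⟫ = ℓ d := by
      intro d
      rw [hη_def, InnerProductSpace.toDual_symm_apply]
      simp
    have hη_mem : η ∈ tangSub f' := by
      intro d
      rw [hηd]
      exact (hℓ d).trans (hN_le d)
    have hg_le_ℓ : ∀ d, g d ≤ ℓ d := by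
      intro d
      have h1 : ℓ (-d) ≤ N (-d) := hℓ (-d)
      have h2 : N (-d) ≤ F (-d) d := hN_le_F (-d) d
      have h3 : F (-d) d = -g d := by simp [hF_def, hf0]
      have h4 : ℓ (-d) = -ℓ d := by rw [map_neg]
      linarith
    have hdiff : ∀ d, ⟪ξ - η, d⟫ ≤ ε * ‖d‖ := by
      intro d
      have h1 := hg_le_ℓ d
      rw [← hηd] at h1
      rw [inner_sub_left]
      simp only [hg_def] at h1
      linarith
    have hnorm : ‖ξ - η‖ ≤ ε := by
      have h1 := hdiff (ξ - η)
      rw [real_inner_self_eq_norm_mul_norm] at h1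
      rcases (norm_nonneg (ξ - η)).eq_or_lt with h | h
      · rw [← h]; exact hε
      · exact le_of_mul_le_mul_right h1 h
    -- assemble
    rw [Set.mem_add]
    refine ⟨η, hη_mem, ξ - η, ?_, by abel⟩
    rcases hε.eq_or_lt with h0 | h0
    · have hz : ξ - η = 0 := by
        rw [← norm_eq_zero]
        exact le_antisymm (by rw [← h0] at hnorm; exact hnorm) (norm_nonneg _)
      rw [hz]
      exact ⟨0, by simp, by simp⟩
    · refine ⟨ε⁻¹ • (ξ - η), ?_, ?_⟩
      · rw [mem_closedBall_zero_iff, norm_smul, Real.norm_eq_abs, abs_of_pos (inv_pos.mpr h0)]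
        rw [inv_mul_le_iff₀ h0, mul_one]
        exact hnorm
      · show ε • ε⁻¹ • (ξ - η) = ξ - η
        rw [smul_smul, mul_inv_cancel₀ h0.ne', one_smul]
  · -- easy direction
    intro hξ d
    rw [Set.mem_add] at hξ
    obtain ⟨η, hη, z, hz, rfl⟩ := hξ
    obtain ⟨b, hb, rfl⟩ := hz
    rw [mem_closedBall_zero_iff] at hb
    have h1 : ⟪η, d⟫ ≤ f' d := hη d
    have h2 : ⟪b, d⟫ ≤ ‖d‖ := by
      calc ⟪b, d⟫ ≤ ‖b‖ * ‖d‖ := real_inner_le_norm b d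
        _ ≤ 1 * ‖d‖ := mul_le_mul_of_nonneg_right hb (norm_nonneg d)
        _ = ‖d‖ := one_mul _
    have h3 : ε * ⟪b, d⟫ ≤ ε * ‖d‖ := mul_le_mul_of_nonneg_left h2 hε
    rw [inner_add_left, real_inner_smul_left]
    linarith
end
end
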